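/- Let X be a Hilbert lattice and let v ∈ X be a unit vector. Let x⁰ ∈ X and define the alternating projection sequences by b⁰ := x⁰, aⁿ⁺¹ := bⁿ − ⟨bⁿ, v⟩v, and bⁿ⁺¹ := (aⁿ⁺¹)⁺ (lattice positive part). Then there exists y ∈ X with ⟨y, v⟩ = 0 and 0 ≤ y, such that both sequences (aⁿ) and (bⁿ) converge in norm to y. (The codimension-one moment problem always has norm-convergent alternating projection sequences.) -/

import Mathlib

open scoped RealInnerProductSpace
open Filter

section AuxHL
variable {X : Type*} [NormedAddCommGroup X] [Lattice X] [HasSolidNorm X] [IsOrderedAddMonoid X] [InnerProductSpace ℝ X]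

lemma hl_inner_nonneg {x y : X} (hx : 0 ≤ x) (hy : 0 ≤ y) : 0 ≤ ⟪x, y⟫ := by
  have h1 : |x - y| ≤ |x + y| := by
    rw [abs_of_nonneg (add_nonneg hx hy)]
    calc |x - y| = |x + (-y)| := by rw [sub_eq_add_neg]
      _ ≤ |x| + |(-y)| := abs_add_le _ _
      _ = x + y := by rw [abs_neg, abs_of_nonneg hx, abs_of_nonneg hy]
  have h2 : ‖x - y‖ ≤ ‖x + y‖ := HasSolidNorm.solid h1
  have e1 := norm_sub_sq_real x y
  have e2 := norm_add_sq_real x y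
  nlinarith [norm_nonneg (x - y), norm_nonneg (x + y)]

lemma hl_inner_mono {x y z : X} (hxy : x ≤ y) (hz : 0 ≤ z) : ⟪x, z⟫ ≤ ⟪y, z⟫ := by
  have h := hl_inner_nonneg (sub_nonneg.2 hxy) hz
  rw [inner_sub_left] at h; linarith

lemma hl_pp_np (v : X) : ⟪(v⁺ : X), (v⁻ : X)⟫ = 0 := by
  have h1 : ‖(v⁺ : X) - v⁻‖ = ‖(v⁺ : X) + v⁻‖ := by
    rw [posPart_sub_negPart, posPart_add_negPart, norm_abs_eq_norm]
  have e1 := norm_sub_sq_real (v⁺ : X) (v⁻ : X)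
  have e2 := norm_add_sq_real (v⁺ : X) (v⁻ : X)
  rw [h1] at e1
  linarith

lemma hl_smul_posPart [PosSMulStrictMono ℝ X] {c : ℝ} (hc : 0 ≤ c) (x : X) :
    (c • x)⁺ = c • (x⁺ : X) := by
  rcases hc.eq_or_lt with h | h
  · simp [← h]
  · have h2 := (OrderIso.smulRight (α := ℝ) (β := X) h).map_sup x 0
    simp only [OrderIso.smulRight_apply, smul_zero] at h2
    rw [posPart_def, posPart_def, ← h2]

lemma hl_norm_posPart_le (x : X) : ‖(x⁺ : X)‖ ≤ ‖x‖ := by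
  apply HasSolidNorm.solid
  rw [abs_of_nonneg (posPart_nonneg x), posPart_def]
  exact sup_le (le_abs_self x) (abs_nonneg x)

omit [InnerProductSpace ℝ X] in
lemma hl_posPart_eq_add (A : X) : (A⁺ : X) = A + A⁻ := by
  have h := posPart_sub_negPart A
  rw [sub_eq_iff_eq_add] at h
  rw [h, add_comm]
end AuxHL

theorem aux_main {X : Type*} [NormedAddCommGroup X] [Lattice X] [HasSolidNorm X] [IsOrderedAddMonoid X] [InnerProductSpace ℝ X]
    [CompleteSpace X] [PosSMulStrictMono ℝ X]
    (v : X) (hv : ‖v‖ = 1) (a b : ℕ → X)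
    (ha : ∀ n : ℕ, a (n + 1) = b n - ⟪b n, v⟫ • v)
    (hb : ∀ n : ℕ, b (n + 1) = a (n + 1) ⊔ 0)
    (hsign : 0 ≤ ⟪b 1, v⟫) :
    ∃ y : X, ⟪y, v⟫ = 0 ∧ 0 ≤ y ∧ Tendsto a atTop (nhds y) ∧ Tendsto b atTop (nhds y) := by
  set c : ℕ → ℝ := fun n => ⟪b n, v⟫ with hcdef
  have hbpos : ∀ n : ℕ, 0 ≤ b (n + 1) := by
    intro n; rw [hb n, ← posPart_def]; exact posPart_nonneg _
  have hav : ∀ n : ℕ, ⟪a (n + 1), v⟫ = 0 := by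
    intro n
    rw [ha n, inner_sub_left, real_inner_smul_left, real_inner_self_eq_norm_sq, hv]
    ring
  have hbb : ∀ n : ℕ, b (n + 1) = a (n + 1) + (a (n + 1))⁻ := by
    intro n; rw [hb n, ← posPart_def, hl_posPart_eq_add]
  have hnormpp : ‖(v⁺ : X)‖ ≤ 1 := by
    rw [← hv]; apply HasSolidNorm.solid
    rw [abs_of_nonneg (posPart_nonneg v), posPart_def]
    exact sup_le (le_abs_self v) (abs_nonneg v)
  -- key step
  have key : ∀ n : ℕ, 0 ≤ c (n + 1) →
      0 ≤ c (n + 2) ∧ c (n + 2) ≤ ‖(v⁺ : X)‖ ^ 2 * c (n + 1) ∧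
      ‖b (n + 2) - b (n + 1)‖ ≤ 2 * c (n + 1) ∧ ((v⁻ : X) = 0 → b (n + 2) ≤ b (n + 1)) := by
    intro n hcn
    set m := n + 1 with hm
    set A := a (m + 1) with hA
    have hAdef : A = b m - c m • v := ha m
    have hdle : (A⁻ : X) ≤ c m • (v⁺ : X) := by
      have h1 : -(c m • v) ≤ A := by
        rw [hAdef]
        have := sub_le_sub_right (hbpos n) (c m • v)
        simpa using this
      have h2 : (A⁻ : X) ≤ ((-(c m • v))⁻ : X) := negPart_anti h1
      rwa [negPart_neg, hl_smul_posPart hcn] at h2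
    have hdnn : (0 : X) ≤ A⁻ := negPart_nonneg A
    have hdv2 : ⟪(A⁻ : X), (v⁻ : X)⟫ = 0 := by
      refine le_antisymm ?_ (hl_inner_nonneg hdnn (negPart_nonneg v))
      calc ⟪(A⁻ : X), (v⁻ : X)⟫ ≤ ⟪c m • (v⁺ : X), (v⁻ : X)⟫ :=
            hl_inner_mono hdle (negPart_nonneg v)
        _ = c m * ⟪(v⁺ : X), (v⁻ : X)⟫ := real_inner_smul_left _ _ _
        _ = 0 := by rw [hl_pp_np]; ring
    have hcsucc : c (m + 1) = ⟪(A⁻ : X), (v⁺ : X)⟫ := by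
      show ⟪b (m + 1), v⟫ = _
      rw [hbb m, inner_add_left, hav m, zero_add, ← hA]
      conv_lhs => rw [← posPart_sub_negPart v]
      rw [inner_sub_right, hdv2, sub_zero]
    have h0 : 0 ≤ c (m + 1) := by
      rw [hcsucc]; exact hl_inner_nonneg hdnn (posPart_nonneg v)
    refine ⟨h0, ?_, ?_, ?_⟩
    · rw [hcsucc]
      calc ⟪(A⁻ : X), (v⁺ : X)⟫ ≤ ⟪c m • (v⁺ : X), (v⁺ : X)⟫ :=
            hl_inner_mono hdle (posPart_nonneg v)
        _ = c m * ⟪(v⁺ : X), (v⁺ : X)⟫ := real_inner_smul_left _ _ _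
        _ = ‖(v⁺ : X)‖ ^ 2 * c m := by rw [real_inner_self_eq_norm_sq]; ring
    · have hdiff : b (m + 1) - b m = (A⁻ : X) - c m • v := by
        rw [hbb m, ← hA, hAdef]; abel
      rw [hdiff]
      have hnd : ‖(A⁻ : X)‖ ≤ c m := by
        have h3 : ‖(A⁻ : X)‖ ≤ ‖c m • (v⁺ : X)‖ := by
          apply HasSolidNorm.solid
          rw [abs_of_nonneg hdnn, abs_of_nonneg (smul_nonneg hcn (posPart_nonneg v))]
          exact hdle
        rw [norm_smul, Real.norm_eq_abs, abs_of_nonneg hcn] at h3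
        nlinarith [norm_nonneg (A⁻ : X)]
      calc ‖(A⁻ : X) - c m • v‖ ≤ ‖(A⁻ : X)‖ + ‖c m • v‖ := norm_sub_le _ _
        _ = ‖(A⁻ : X)‖ + c m := by
            rw [norm_smul, Real.norm_eq_abs, abs_of_nonneg hcn, hv, mul_one]
        _ ≤ 2 * c m := by linarith
    · intro hu
      have hvp : (v⁺ : X) = v := by
        have h6 := posPart_sub_negPart v
        rw [hu, sub_zero] at h6; exact h6
      have hdle' : (A⁻ : X) ≤ c m • v := by rw [← hvp]; exact hdle
      rw [hbb m, ← hA]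
      calc A + (A⁻ : X) ≤ A + c m • v := add_le_add_right hdle' A
        _ = b m := by rw [hAdef]; abel
  have hcpos : ∀ n : ℕ, 0 ≤ c (n + 1) := by
    intro n; induction n with
    | zero => exact hsign
    | succ k ih => exact (key k ih).1
  have hα0 : (0:ℝ) ≤ ‖(v⁺ : X)‖ ^ 2 := sq_nonneg _
  have hα1 : ‖(v⁺ : X)‖ ^ 2 ≤ 1 := by nlinarith [norm_nonneg (v⁺ : X)]
  have hcauchy : CauchySeq (fun n => b (n + 1)) := by
    rcases hα1.lt_or_eq with hlt | heq
    · have hgeo : ∀ n : ℕ, c (n + 1) ≤ c 1 * (‖(v⁺ : X)‖ ^ 2) ^ n := by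
        intro n; induction n with
        | zero => simp
        | succ k ih =>
          calc c (k + 2) ≤ ‖(v⁺ : X)‖ ^ 2 * c (k + 1) := (key k (hcpos k)).2.1
            _ ≤ ‖(v⁺ : X)‖ ^ 2 * (c 1 * (‖(v⁺ : X)‖ ^ 2) ^ k) :=
                mul_le_mul_of_nonneg_left ih hα0
            _ = c 1 * (‖(v⁺ : X)‖ ^ 2) ^ (k + 1) := by ring
      apply cauchySeq_of_summable_dist
      have hsum : Summable (fun n : ℕ => (2 * c 1) * (‖(v⁺ : X)‖ ^ 2) ^ n) :=
        (summable_geometric_of_lt_one hα0 hlt).mul_left _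
      refine Summable.of_nonneg_of_le (fun n => dist_nonneg) (fun n => ?_) hsum
      rw [dist_eq_norm, norm_sub_rev]
      calc ‖b (n + 2) - b (n + 1)‖ ≤ 2 * c (n + 1) := (key n (hcpos n)).2.2.1
        _ ≤ 2 * (c 1 * (‖(v⁺ : X)‖ ^ 2) ^ n) := by linarith [hgeo n]
        _ = 2 * c 1 * (‖(v⁺ : X)‖ ^ 2) ^ n := by ring
    · have hu : (v⁻ : X) = 0 := by
        have h1 : ‖v‖ ^ 2 = ‖(v⁺ : X)‖ ^ 2 + ‖(v⁻ : X)‖ ^ 2 := by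
          conv_lhs => rw [← posPart_sub_negPart v]
          rw [norm_sub_sq_real, hl_pp_np]; ring
        rw [hv] at h1
        have : ‖(v⁻ : X)‖ = 0 := by nlinarith [norm_nonneg (v⁻ : X)]
        exact norm_eq_zero.mp this
      have hmono : ∀ n : ℕ, b (n + 2) ≤ b (n + 1) := fun n => (key n (hcpos n)).2.2.2 hu
      have hBanti : Antitone (fun n => b (n + 1)) := antitone_nat_of_succ_le hmono
      have hnormanti : Antitone (fun n => ‖b (n + 1)‖ ^ 2) := by
        intro n m hnm
        have h1 : b (m + 1) ≤ b (n + 1) := hBanti hnm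
        have h2 : ‖b (m + 1)‖ ≤ ‖b (n + 1)‖ := by
          apply HasSolidNorm.solid
          rw [abs_of_nonneg (hbpos m), abs_of_nonneg (hbpos n)]; exact h1
        simp only
        nlinarith [norm_nonneg (b (m + 1))]
      have hbdd : BddBelow (Set.range fun n => ‖b (n + 1)‖ ^ 2) := by
        refine ⟨0, ?_⟩; rintro x ⟨n, rfl⟩; positivity
      have hcau : CauchySeq (fun n => ‖b (n + 1)‖ ^ 2) :=
        (tendsto_atTop_ciInf hnormanti hbdd).cauchySeq
      rw [Metric.cauchySeq_iff'] at hcau ⊢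
      intro ε hε
      obtain ⟨N, hN⟩ := hcau (ε ^ 2) (by positivity)
      refine ⟨N, fun n hn => ?_⟩
      have h1 : b (n + 1) ≤ b (N + 1) := hBanti hn
      have h2 : 0 ≤ ⟪b (N + 1) - b (n + 1), b (n + 1)⟫ :=
        hl_inner_nonneg (sub_nonneg.2 h1) (hbpos n)
      rw [inner_sub_left] at h2
      have e := norm_sub_sq_real (b (n + 1)) (b (N + 1))
      have e2 : ⟪b (N + 1), b (n + 1)⟫ = ⟪b (n + 1), b (N + 1)⟫ := real_inner_comm _ _
      have e3 := real_inner_self_eq_norm_sq (b (n + 1))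
      have hkey : ‖b (n + 1) - b (N + 1)‖ ^ 2 ≤ ‖b (N + 1)‖ ^ 2 - ‖b (n + 1)‖ ^ 2 := by
        linarith
      have hNn := hN n hn
      rw [Real.dist_eq] at hNn
      have hlt2 : dist (b (n + 1)) (b (N + 1)) ^ 2 < ε ^ 2 := by
        rw [dist_eq_norm]
        calc ‖b (n + 1) - b (N + 1)‖ ^ 2 ≤ ‖b (N + 1)‖ ^ 2 - ‖b (n + 1)‖ ^ 2 := hkey
          _ ≤ |‖b (n + 1)‖ ^ 2 - ‖b (N + 1)‖ ^ 2| := by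
              rw [abs_sub_comm]; exact le_abs_self _
          _ < ε ^ 2 := hNn
      exact lt_of_pow_lt_pow_left₀ 2 hε.le hlt2
  obtain ⟨y, hy⟩ := cauchySeq_tendsto_of_complete hcauchy
  have hby : Tendsto b atTop (nhds y) := (tendsto_add_atTop_iff_nat 1).mp hy
  have hy0 : 0 ≤ y := ge_of_tendsto' hy hbpos
  have hcv : Tendsto c atTop (nhds ⟪y, v⟫) := hby.inner tendsto_const_nhds
  have hpyth : ∀ n : ℕ, ‖b (n + 1)‖ ^ 2 + c n ^ 2 ≤ ‖b n‖ ^ 2 := by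
    intro n
    have h1 : ‖b (n + 1)‖ ≤ ‖a (n + 1)‖ := by
      rw [hb n, ← posPart_def]; exact hl_norm_posPart_le _
    have h2 : ‖b n‖ ^ 2 = ‖a (n + 1)‖ ^ 2 + c n ^ 2 := by
      have e : b n = a (n + 1) + c n • v := by rw [ha n]; abel
      rw [e, norm_add_sq_real, real_inner_smul_right, hav n, norm_smul,
        Real.norm_eq_abs, hv, mul_one, sq_abs]
      ring
    nlinarith [norm_nonneg (a (n + 1)), norm_nonneg (b (n + 1))]
  have hnb : Tendsto (fun n => ‖b n‖ ^ 2) atTop (nhds (‖y‖ ^ 2)) := hby.norm.pow 2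
  have hnb1 : Tendsto (fun n => ‖b (n + 1)‖ ^ 2) atTop (nhds (‖y‖ ^ 2)) :=
    hnb.comp (tendsto_add_atTop_nat 1)
  have hc2 : Tendsto (fun n => c n ^ 2) atTop (nhds 0) := by
    have hg : Tendsto (fun n => ‖b n‖ ^ 2 - ‖b (n + 1)‖ ^ 2) atTop (nhds 0) := by
      simpa using hnb.sub hnb1
    exact squeeze_zero (fun n => sq_nonneg _) (fun n => by linarith [hpyth n]) hg
  have hyv : ⟪y, v⟫ = 0 := by
    have h3 : Tendsto (fun n => c n ^ 2) atTop (nhds (⟪y, v⟫ ^ 2)) := hcv.pow 2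
    have h4 := tendsto_nhds_unique h3 hc2
    exact pow_eq_zero_iff (two_ne_zero) |>.mp h4
  have hc0 : Tendsto c atTop (nhds 0) := hyv ▸ hcv
  have hay : Tendsto a atTop (nhds y) := by
    apply (tendsto_add_atTop_iff_nat 1).mp
    have h5 : Tendsto (fun n => b n - c n • v) atTop (nhds (y - (0:ℝ) • v)) :=
      hby.sub (hc0.smul_const v)
    rw [zero_smul, sub_zero] at h5
    convert h5 using 2 with n
    exact ha n
  exact ⟨y, hyv, hy0, hay, hby⟩

/-- The codimension-one moment problem in a Hilbert lattice always has
norm-convergent alternating projection sequences. -/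
theorem alternating_projections_codimension_one
    {X : Type*} [NormedAddCommGroup X] [Lattice X] [HasSolidNorm X] [IsOrderedAddMonoid X] [InnerProductSpace ℝ X] [CompleteSpace X]
    [PosSMulStrictMono ℝ X]
    (v : X) (hv : ‖v‖ = 1)
    (x0 : X)
    (a b : ℕ → X)
    (hb0 : b 0 = x0)
    (ha : ∀ n : ℕ, a (n + 1) = b n - ⟪b n, v⟫ • v)
    (hb : ∀ n : ℕ, b (n + 1) = a (n + 1) ⊔ 0) :
    ∃ y : X,
      ⟪y, v⟫ = 0 ∧ 0 ≤ y ∧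
      Tendsto a atTop (nhds y) ∧ Tendsto b atTop (nhds y) := by
  rcases le_total 0 ⟪b 1, v⟫ with hs | hs
  · exact aux_main v hv a b ha hb hs
  · have hv' : ‖-v‖ = 1 := by rwa [norm_neg]
    have ha' : ∀ n : ℕ, a (n + 1) = b n - ⟪b n, -v⟫ • (-v) := by
      intro n
      rw [ha n, inner_neg_right, neg_smul, smul_neg, neg_neg]
    have hs' : 0 ≤ ⟪b 1, -v⟫ := by rw [inner_neg_right]; linarith
    obtain ⟨y, h1, h2, h3, h4⟩ := aux_main (-v) hv' a b ha' hb hs'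
    rw [inner_neg_right, neg_eq_zero] at h1
    exact ⟨y, h1, h2, h3, h4⟩
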